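/- There exists an absolute constant C > 0 with the following property. Let m ≥ 0, let {φ_n}_{n=1}^{2^m} be a real-valued orthonormal system on 𝕋 = [0,1], and let a_1, …, a_{2^m} be real coefficients. Define the lacunary difference sequence at each x ∈ 𝕋 by D_0(x) = a_1 φ_1(x) and D_k(x) = ∑_{n=2^{k−1}+1}^{2^k} a_n φ_n(x) for 1 ≤ k ≤ m. Then (∫_𝕋 ‖(D_k(x))_{k=0}^m‖²_{V²} dx)^{1/2} ≤ C (∑_{n=1}^{2^m} ln(n+1) a_n²)^{1/2}. -/

import Mathlib

/-!
Cover each interval `(u, v]` of a partition of `{1, …, N}` by dyadic intervals `(t 2^s, (t+1) 2^s]`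
with at most two of each length, all starting at a positive point except `{1}`. Cauchy–Schwarz with
weights `2^{-s}` bounds the square of the sum over `(u, v]` by `7 ∑ 2^s S_I²`, the `S_I` being the
sums over the dyadic pieces `I`; the pieces of different intervals of the partition are different,
so `‖D‖²_{V²}` is at most `7 ∑_I 2^{s(I)} S_I²`, summed over all admissible dyadic `I`, whatever the
partition. After integration, orthogonality turns `S_I²` into `∑_{K ∈ I} ‖D_K‖²`, and the
admissible `I` containing `K` have total length at most `2K`. Finally `K ≤ 3 log (n + 1)` for `n` in
the `K`-th lacunary block.
-/

open MeasureTheory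

/-- The square variation norm of the finite sequence `a 1, …, a N`. -/
noncomputable def sqVar (N : ℕ) (a : ℕ → ℝ) : ℝ :=
  sSup { r : ℝ | ∃ (m : ℕ) (c : ℕ → ℕ), StrictMono c ∧ c 0 = 0 ∧ c m = N ∧
    r = Real.sqrt (∑ j ∈ Finset.range m,
      (∑ n ∈ Finset.Ioc (c j) (c (j + 1)), a n) ^ 2) }

open Finset

def dyadicInterval (p : ℕ × ℕ) : Finset ℕ := Ioc (p.2 * 2 ^ p.1) ((p.2 + 1) * 2 ^ p.1)

lemma dyadicInterval_nonempty (p : ℕ × ℕ) : (dyadicInterval p).Nonempty :=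
  nonempty_Ioc.2 (Nat.mul_lt_mul_of_pos_right (Nat.lt_succ_self _) (Nat.two_pow_pos _))

def IsDyadicCover (D : Finset (ℕ × ℕ)) (u v : ℕ) : Prop :=
  (D : Set (ℕ × ℕ)).PairwiseDisjoint dyadicInterval ∧ D.biUnion dyadicInterval = Ioc u v

namespace IsDyadicCover

variable {D D' : Finset (ℕ × ℕ)} {u v u' v' : ℕ}

lemma subset (hD : IsDyadicCover D u v) {p : ℕ × ℕ} (hp : p ∈ D) : dyadicInterval p ⊆ Ioc u v :=
  hD.2 ▸ subset_biUnion_of_mem _ hp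

lemma disjoint (hD : IsDyadicCover D u v) (hD' : IsDyadicCover D' u' v')
    (h : Disjoint (Ioc u v) (Ioc u' v')) : Disjoint D D' := by
  refine disjoint_left.2 fun p hp hp' => ?_
  obtain ⟨K, hK⟩ := dyadicInterval_nonempty p
  exact disjoint_left.1 h (hD.subset hp hK) (hD'.subset hp' hK)

lemma union (hD : IsDyadicCover D u v) (hD' : IsDyadicCover D' v v') (huv : u ≤ v) (hvv' : v ≤ v') :
    IsDyadicCover (D ∪ D') u v' := by
  classical
  refine ⟨?_, ?_⟩
  · rw [coe_union]
    refine hD.1.union hD'.1 fun p hp q hq _ => ?_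
    exact (Ioc_disjoint_Ioc_of_le le_rfl).mono (hD.subset hp) (hD'.subset hq)
  · rw [union_biUnion, hD.2, hD'.2, Ioc_union_Ioc_eq_Ioc huv hvv']

end IsDyadicCover

noncomputable def dyadicCost (D : Finset (ℕ × ℕ)) : ℝ := ∑ p ∈ D, ((2 : ℝ) ^ p.1)⁻¹

def HasDyadicCover (u v : ℕ) (c : ℝ) : Prop := ∃ D, IsDyadicCover D u v ∧ dyadicCost D ≤ c

namespace HasDyadicCover

lemma refl (u : ℕ) : HasDyadicCover u u 0 :=
  ⟨∅, ⟨by simp, by simp⟩, by simp [dyadicCost]⟩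

lemma mono {u v : ℕ} {c c' : ℝ} (h : HasDyadicCover u v c) (hc : c ≤ c') : HasDyadicCover u v c' :=
  let ⟨D, hD, hcost⟩ := h; ⟨D, hD, hcost.trans hc⟩

lemma trans {u v w : ℕ} {c c' : ℝ} (huv : u ≤ v) (hvw : v ≤ w) (h : HasDyadicCover u v c)
    (h' : HasDyadicCover v w c') : HasDyadicCover u w (c + c') := by
  classical
  obtain ⟨D, hD, hc⟩ := h
  obtain ⟨D', hD', hc'⟩ := h'
  refine ⟨D ∪ D', hD.union hD' huv hvw, ?_⟩
  rw [dyadicCost, sum_union (hD.disjoint hD' (Ioc_disjoint_Ioc_of_le le_rfl))]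
  exact add_le_add hc hc'

end HasDyadicCover

lemma hasDyadicCover_dyadicInterval (s t : ℕ) :
    HasDyadicCover (t * 2 ^ s) ((t + 1) * 2 ^ s) ((2 : ℝ) ^ s)⁻¹ :=
  ⟨{(s, t)}, ⟨by simp, by simp [dyadicInterval]⟩, by simp [dyadicCost]⟩

lemma hasDyadicCover_singleton (t : ℕ) : HasDyadicCover t (t + 1) 1 := by
  simpa using hasDyadicCover_dyadicInterval 0 t

lemma mul_two_pow_succ (s t : ℕ) :
    t * 2 ^ (s + 1) = 2 * t * 2 ^ s ∧ (2 * t + 1 + 1) * 2 ^ s = (t + 1) * 2 ^ (s + 1) := by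
  constructor <;> ring

-- `3 - 2 / 2 ^ s = 1 + ∑_{j<s} 2^{-j}`: a singleton and at most one interval of each length `2^j`.
lemma hasDyadicCover_Ioc_right (s : ℕ) : ∀ t u, t * 2 ^ s ≤ u → u ≤ (t + 1) * 2 ^ s →
    HasDyadicCover u ((t + 1) * 2 ^ s) (3 - 2 / 2 ^ s) := by
  induction s with
  | zero =>
    intro t u h₁ h₂
    simp only [pow_zero, mul_one] at h₁ h₂ ⊢
    obtain rfl | rfl : u = t ∨ u = t + 1 := by omega
    · exact (hasDyadicCover_singleton u).mono (by norm_num)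
    · exact (HasDyadicCover.refl _).mono (by norm_num)
  | succ s ih =>
    intro t u h₁ h₂
    obtain ⟨e₁, e₂⟩ := mul_two_pow_succ s t
    rw [← e₂]
    have hcost : (3 : ℝ) - 2 / 2 ^ s + (2 ^ s)⁻¹ = 3 - 2 / 2 ^ (s + 1) := by
      field_simp; ring
    by_cases hu : (2 * t + 1) * 2 ^ s ≤ u
    · exact (ih (2 * t + 1) u hu (by omega)).mono (hcost ▸ le_add_of_nonneg_right (by positivity))
    · rw [← hcost]
      exact HasDyadicCover.trans (by omega) (by nlinarith) (ih (2 * t) u (by omega) (by omega))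
        (hasDyadicCover_dyadicInterval s (2 * t + 1))

lemma hasDyadicCover_Ioc_left (s : ℕ) : ∀ t v, t * 2 ^ s ≤ v → v ≤ (t + 1) * 2 ^ s →
    HasDyadicCover (t * 2 ^ s) v (3 - 2 / 2 ^ s) := by
  induction s with
  | zero =>
    intro t v h₁ h₂
    simp only [pow_zero, mul_one] at h₁ h₂ ⊢
    obtain rfl | rfl : v = t ∨ v = t + 1 := by omega
    · exact (HasDyadicCover.refl _).mono (by norm_num)
    · exact (hasDyadicCover_singleton t).mono (by norm_num)
  | succ s ih =>
    intro t v h₁ h₂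
    obtain ⟨e₁, e₂⟩ := mul_two_pow_succ s t
    rw [e₁]
    have hcost : ((2 : ℝ) ^ s)⁻¹ + (3 - 2 / 2 ^ s) = 3 - 2 / 2 ^ (s + 1) := by
      field_simp; ring
    by_cases hv : v ≤ (2 * t + 1) * 2 ^ s
    · exact (ih (2 * t) v (by omega) hv).mono (hcost ▸ le_add_of_nonneg_left (by positivity))
    · rw [← hcost]
      exact HasDyadicCover.trans (by nlinarith) (by omega) (hasDyadicCover_dyadicInterval s (2 * t))
        (ih (2 * t + 1) v (by omega) (by omega))

lemma hasDyadicCover_Ioc (s : ℕ) : ∀ t u v, t * 2 ^ s ≤ u → u ≤ v → v ≤ (t + 1) * 2 ^ s →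
    HasDyadicCover u v 6 := by
  induction s with
  | zero =>
    intro t u v h₁ huv h₂
    simp only [pow_zero, mul_one] at h₁ h₂
    obtain rfl | ⟨rfl, rfl⟩ : u = v ∨ u = t ∧ v = t + 1 := by omega
    · exact (HasDyadicCover.refl _).mono (by norm_num)
    · exact (hasDyadicCover_singleton u).mono (by norm_num)
  | succ s ih =>
    intro t u v h₁ huv h₂
    obtain ⟨e₁, e₂⟩ := mul_two_pow_succ s t
    by_cases hv : v ≤ (2 * t + 1) * 2 ^ s
    · exact ih (2 * t) u v (by omega) huv hv
    by_cases hu : (2 * t + 1) * 2 ^ s ≤ u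
    · exact ih (2 * t + 1) u v hu huv (by omega)
    have hcost : (3 : ℝ) - 2 / 2 ^ s + (3 - 2 / 2 ^ s) ≤ 6 := by
      have : (0 : ℝ) ≤ 2 / 2 ^ s := by positivity
      linarith
    exact (HasDyadicCover.trans (by omega) (by omega)
      (hasDyadicCover_Ioc_right s (2 * t) u (by omega) (by omega))
      (hasDyadicCover_Ioc_left s (2 * t + 1) v (by omega) (by omega))).mono hcost

lemma two_pow_le_of_mem_dyadicInterval {p : ℕ × ℕ} {u v K : ℕ} (hu : 1 ≤ u)
    (hsub : dyadicInterval p ⊆ Ioc u v) (hK : K ∈ dyadicInterval p) : 2 ^ p.1 ≤ K := by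
  have hpos := Nat.two_pow_pos p.1
  have hstart : p.2 * 2 ^ p.1 + 1 ∈ dyadicInterval p := by
    simp only [dyadicInterval, mem_Ioc, add_mul, one_mul]; omega
  have hu' := (mem_Ioc.1 (hsub hstart)).1
  have ht : 1 ≤ p.2 := Nat.pos_of_ne_zero fun h => by simp [h] at hu'; omega
  have := Nat.le_mul_of_pos_left (2 ^ p.1) ht
  simp only [dyadicInterval, mem_Ioc] at hK
  omega

lemma exists_isDyadicCover_of_one_le {u v : ℕ} (hu : 1 ≤ u) (huv : u ≤ v) :
    ∃ D, IsDyadicCover D u v ∧ dyadicCost D ≤ 6 ∧ ∀ p ∈ D, ∀ K ∈ dyadicInterval p, 2 ^ p.1 ≤ K := by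
  obtain ⟨D, hD, hc⟩ := hasDyadicCover_Ioc v 0 u v (by simp) huv
    (by simpa using Nat.lt_two_pow_self.le)
  exact ⟨D, hD, hc, fun p hp K hK => two_pow_le_of_mem_dyadicInterval hu (hD.subset hp) hK⟩

lemma exists_isDyadicCover {u v : ℕ} (huv : u ≤ v) :
    ∃ D, IsDyadicCover D u v ∧ dyadicCost D ≤ 7 ∧ ∀ p ∈ D, ∀ K ∈ dyadicInterval p, 2 ^ p.1 ≤ K := by
  classical
  rcases Nat.eq_zero_or_pos u with rfl | hu
  · rcases Nat.eq_zero_or_pos v with rfl | hv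
    · exact ⟨∅, ⟨by simp, by simp⟩, by simp [dyadicCost], by simp⟩
    obtain ⟨D, hD, hc, hshort⟩ := exists_isDyadicCover_of_one_le le_rfl hv
    have h₀ : IsDyadicCover {(0, 0)} 0 1 := ⟨by simp, by simp [dyadicInterval]⟩
    refine ⟨{(0, 0)} ∪ D, h₀.union hD zero_le_one hv, ?_, ?_⟩
    · have hcost : dyadicCost ({(0, 0)} ∪ D) = 1 + dyadicCost D := by
        rw [dyadicCost, dyadicCost, sum_union (h₀.disjoint hD (Ioc_disjoint_Ioc_of_le le_rfl)),
          sum_singleton]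
        norm_num
      linarith
    · simp only [mem_union, mem_singleton]
      rintro p (rfl | hp) K hK
      · simp [dyadicInterval] at hK ⊢; omega
      · exact hshort p hp K hK
  · obtain ⟨D, hD, hc, hshort⟩ := exists_isDyadicCover_of_one_le hu huv
    exact ⟨D, hD, by linarith, hshort⟩

def shortDyadicIntervals (N : ℕ) : Finset (ℕ × ℕ) :=
  (range (N + 1) ×ˢ range (N + 1)).filter fun p =>
    dyadicInterval p ⊆ Ioc 0 N ∧ ∀ K ∈ dyadicInterval p, 2 ^ p.1 ≤ K

lemma mem_shortDyadicIntervals {N : ℕ} {p : ℕ × ℕ} (hsub : dyadicInterval p ⊆ Ioc 0 N)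
    (hshort : ∀ K ∈ dyadicInterval p, 2 ^ p.1 ≤ K) : p ∈ shortDyadicIntervals N := by
  obtain ⟨K, hK⟩ := dyadicInterval_nonempty p
  have hKN := (mem_Ioc.1 (hsub hK)).2
  have h₁ : p.1 < 2 ^ p.1 := Nat.lt_two_pow_self
  have h₂ : p.2 ≤ p.2 * 2 ^ p.1 := Nat.le_mul_of_pos_right _ (Nat.two_pow_pos _)
  have h₃ := hshort K hK
  simp only [dyadicInterval, mem_Ioc] at hK
  exact mem_filter.2 ⟨mem_product.2 ⟨mem_range.2 (by omega), mem_range.2 (by omega)⟩, hsub, hshort⟩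

lemma IsDyadicCover.sq_sum_le {D : Finset (ℕ × ℕ)} {u v : ℕ} (hD : IsDyadicCover D u v)
    (f : ℕ → ℝ) : (∑ K ∈ Ioc u v, f K) ^ 2 ≤
      dyadicCost D * ∑ p ∈ D, 2 ^ p.1 * (∑ K ∈ dyadicInterval p, f K) ^ 2 := by
  classical
  rw [← hD.2, sum_biUnion hD.1, dyadicCost]
  refine sum_sq_le_sum_mul_sum_of_sq_le_mul D (fun p _ => by positivity)
    (fun p _ => by positivity) fun p _ => ?_
  rw [← mul_assoc, inv_mul_cancel₀ (by positivity), one_mul]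

lemma sum_sq_sum_Ioc_le {M N : ℕ} {c : ℕ → ℕ} (hc : StrictMono c) (hcM : c M = N) (f : ℕ → ℝ) :
    ∑ j ∈ range M, (∑ K ∈ Ioc (c j) (c (j + 1)), f K) ^ 2 ≤
      7 * ∑ p ∈ shortDyadicIntervals N, 2 ^ p.1 * (∑ K ∈ dyadicInterval p, f K) ^ 2 := by
  classical
  choose D hD hcost hshort using fun j => exists_isDyadicCover (hc.monotone (Nat.le_succ j))
  set w : ℕ × ℕ → ℝ := fun p => 2 ^ p.1 * (∑ K ∈ dyadicInterval p, f K) ^ 2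
  have hw : ∀ p, 0 ≤ w p := fun p => by positivity
  have hdisj : (range M : Set ℕ).PairwiseDisjoint D := by
    intro i _ j _ hij
    rcases hij.lt_or_gt with h | h
    · exact (hD i).disjoint (hD j) (Ioc_disjoint_Ioc_of_le (hc.monotone h))
    · exact (hD i).disjoint (hD j) (Ioc_disjoint_Ioc_of_le (hc.monotone h)).symm
  have hsub : (range M).biUnion D ⊆ shortDyadicIntervals N := by
    intro p hp
    obtain ⟨j, hj, hpj⟩ := mem_biUnion.1 hp
    refine mem_shortDyadicIntervals ((hD j).subset hpj |>.trans (Ioc_subset_Ioc (Nat.zero_le _) ?_))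
      (hshort j p hpj)
    exact hcM ▸ hc.monotone (mem_range.1 hj)
  calc ∑ j ∈ range M, (∑ K ∈ Ioc (c j) (c (j + 1)), f K) ^ 2
      ≤ ∑ j ∈ range M, 7 * ∑ p ∈ D j, w p := by
        refine sum_le_sum fun j _ => (hD j).sq_sum_le f |>.trans ?_
        exact mul_le_mul_of_nonneg_right (hcost j) (sum_nonneg fun p _ => hw p)
    _ = 7 * ∑ p ∈ (range M).biUnion D, w p := by rw [sum_biUnion hdisj, mul_sum]
    _ ≤ 7 * ∑ p ∈ shortDyadicIntervals N, w p := by gcongr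

lemma sqVar_sq_le_of_forall {N : ℕ} {f : ℕ → ℝ} {G : ℝ} (hG : 0 ≤ G)
    (h : ∀ (M : ℕ) (c : ℕ → ℕ), StrictMono c → c 0 = 0 → c M = N →
      ∑ j ∈ range M, (∑ K ∈ Ioc (c j) (c (j + 1)), f K) ^ 2 ≤ G) :
    sqVar N f ^ 2 ≤ G := by
  have hle : sqVar N f ≤ √G := by
    refine Real.sSup_le ?_ (Real.sqrt_nonneg G)
    rintro r ⟨M, c, hc, hc0, hcM, rfl⟩
    exact Real.sqrt_le_sqrt (h M c hc hc0 hcM)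
  have hnonneg : 0 ≤ sqVar N f := Real.sSup_nonneg (by rintro r ⟨_, _, _, _, _, rfl⟩; positivity)
  calc sqVar N f ^ 2 ≤ √G ^ 2 := pow_le_pow_left₀ hnonneg hle 2
    _ = G := Real.sq_sqrt hG

lemma sqVar_sq_le (N : ℕ) (f : ℕ → ℝ) :
    sqVar N f ^ 2 ≤ 7 * ∑ p ∈ shortDyadicIntervals N, 2 ^ p.1 * (∑ K ∈ dyadicInterval p, f K) ^ 2 :=
  sqVar_sq_le_of_forall (by positivity) fun _ _ hc _ hcM => sum_sq_sum_Ioc_le hc hcM f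

lemma sum_two_pow_shortDyadicIntervals_le (N K : ℕ) :
    ∑ p ∈ (shortDyadicIntervals N).filter (K ∈ dyadicInterval ·), 2 ^ p.1 ≤ 2 * K := by
  set F := (shortDyadicIntervals N).filter (K ∈ dyadicInterval ·)
  rcases F.eq_empty_or_nonempty with hF | ⟨q, hq⟩
  · simp [hF]
  have hK : 1 ≤ K := by
    have := (mem_filter.1 hq).2
    simp only [dyadicInterval, mem_Ioc] at this; omega
  -- at each length `2^s` there is only one dyadic interval containing `K`
  have hinj : Set.InjOn Prod.fst (F : Set (ℕ × ℕ)) := by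
    rintro ⟨s, t⟩ hp ⟨s', t'⟩ hp' (rfl : s = s')
    have h := (mem_filter.1 hp).2
    have h' := (mem_filter.1 hp').2
    simp only [dyadicInterval, mem_Ioc] at h h'
    have h₁ : t < t' + 1 := Nat.lt_of_mul_lt_mul_right (h.1.trans_le h'.2)
    have h₂ : t' < t + 1 := Nat.lt_of_mul_lt_mul_right (h'.1.trans_le h.2)
    rw [show t = t' by omega]
  have himage : F.image Prod.fst ⊆ range (Nat.log 2 K + 1) := by
    intro s hs
    obtain ⟨p, hp, rfl⟩ := mem_image.1 hs
    have hshort := ((mem_filter.1 (mem_filter.1 hp).1).2.2) K (mem_filter.1 hp).2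
    exact mem_range.2 (Nat.lt_succ_of_le (Nat.le_log_of_pow_le one_lt_two hshort))
  calc ∑ p ∈ F, 2 ^ p.1 = ∑ s ∈ F.image Prod.fst, 2 ^ s := (sum_image hinj).symm
    _ ≤ ∑ s ∈ range (Nat.log 2 K + 1), 2 ^ s := sum_le_sum_of_subset himage
    _ ≤ 2 ^ (Nat.log 2 K + 1) := by rw [Nat.geomSum_eq le_rfl, Nat.div_one]; exact Nat.sub_le _ _
    _ ≤ 2 * K := by
        rw [pow_succ, mul_comm]; exact Nat.mul_le_mul_left 2 (Nat.pow_log_le_self 2 (by omega))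

lemma sum_shortDyadicIntervals_le (N : ℕ) {e : ℕ → ℝ} (he : ∀ K, 0 ≤ e K) :
    ∑ p ∈ shortDyadicIntervals N, 2 ^ p.1 * ∑ K ∈ dyadicInterval p, e K ≤
      2 * ∑ K ∈ Ioc 0 N, K * e K := by
  classical
  have hswap : ∀ (p : ℕ × ℕ) (K : ℕ), p ∈ shortDyadicIntervals N ∧ K ∈ dyadicInterval p ↔
      p ∈ (shortDyadicIntervals N).filter (K ∈ dyadicInterval ·) ∧ K ∈ Ioc 0 N := fun p K =>
    ⟨fun ⟨hp, hK⟩ => ⟨mem_filter.2 ⟨hp, hK⟩, (mem_filter.1 hp).2.1 hK⟩,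
      fun ⟨hp, _⟩ => mem_filter.1 hp⟩
  calc ∑ p ∈ shortDyadicIntervals N, 2 ^ p.1 * ∑ K ∈ dyadicInterval p, e K
      = ∑ K ∈ Ioc 0 N, (∑ p ∈ (shortDyadicIntervals N).filter (K ∈ dyadicInterval ·),
          ((2 ^ p.1 : ℕ) : ℝ)) * e K := by
        simp_rw [mul_sum, sum_mul]
        push_cast
        exact sum_comm' hswap
    _ ≤ ∑ K ∈ Ioc 0 N, ((2 * K : ℕ) : ℝ) * e K := by
        gcongr with K
        · exact he K
        · rw [← Nat.cast_sum]
          exact_mod_cast sum_two_pow_shortDyadicIntervals_le N K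
    _ = 2 * ∑ K ∈ Ioc 0 N, K * e K := by push_cast; rw [mul_sum]; simp_rw [mul_assoc]

/-- The `K`-th lacunary block: `{1}` for `K = 1` and `(2^{K-2}, 2^{K-1}]` for `K ≥ 2`. -/
def lacunaryBlock (K : ℕ) : Finset ℕ := Ioc (2 ^ K / 4) (2 ^ (K + 1) / 4)

lemma ite_eq_sum_lacunaryBlock (g : ℕ → ℝ) (K : ℕ) :
    (if K = 1 then g 1 else ∑ n ∈ Ioc (2 ^ (K - 2)) (2 ^ (K - 1)), g n) =
      ∑ n ∈ lacunaryBlock K, g n := by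
  rcases K with _ | _ | K
  · simp [lacunaryBlock]
  · simp [lacunaryBlock]
  · have h₁ : 2 ^ (K + 2) / 4 = 2 ^ K := by rw [pow_add]; simp
    have h₂ : 2 ^ (K + 2 + 1) / 4 = 2 ^ (K + 1) := by rw [pow_add 2 (K + 1) 2]; simp
    simp [lacunaryBlock, h₁, h₂]

lemma lacunaryBlock_disjoint {K L : ℕ} (h : K ≠ L) :
    Disjoint (lacunaryBlock K) (lacunaryBlock L) := by
  have key : ∀ {K L : ℕ}, K < L → Disjoint (lacunaryBlock K) (lacunaryBlock L) := fun hKL =>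
    Ioc_disjoint_Ioc_of_le (Nat.div_le_div_right (Nat.pow_le_pow_right two_pos hKL))
  rcases h.lt_or_gt with h | h
  exacts [key h, (key h).symm]

lemma lacunaryBlock_subset {m K : ℕ} (hK : K ≤ m + 1) : lacunaryBlock K ⊆ Icc 1 (2 ^ m) := by
  intro n hn
  have hpow : 2 ^ (K + 1) / 4 ≤ 2 ^ m := calc
    2 ^ (K + 1) / 4 ≤ 2 ^ (m + 2) / 4 :=
        Nat.div_le_div_right (Nat.pow_le_pow_right two_pos (by omega))
    _ = 2 ^ m := by rw [pow_add]; simp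
  simp only [lacunaryBlock, mem_Ioc] at hn
  exact mem_Icc.2 ⟨by omega, by omega⟩

lemma natCast_le_three_mul_log {K n : ℕ} (hn : n ∈ lacunaryBlock K) :
    (K : ℝ) ≤ 3 * Real.log (n + 1) := by
  have hlt : 2 ^ K < 4 * n := by
    have := (mem_Ioc.1 hn).1
    have := Nat.lt_mul_div_succ (2 ^ K) (show 0 < 4 by norm_num)
    omega
  have hpow : (2 : ℝ) ^ K ≤ ((n : ℝ) + 1) ^ 2 := by
    have : ((2 ^ K : ℕ) : ℝ) < 4 * n := by exact_mod_cast hlt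
    push_cast at this
    nlinarith [sq_nonneg ((n : ℝ) - 1)]
  have hlog := Real.log_le_log (by positivity) hpow
  rw [Real.log_pow, Real.log_pow] at hlog
  have hlog2 := Real.log_two_gt_d9
  have hlogn : 0 ≤ Real.log (n + 1) := Real.log_nonneg (by linarith [n.cast_nonneg (α := ℝ)])
  push_cast at hlog
  nlinarith

lemma sum_mul_sum_lacunaryBlock_le (m : ℕ) {b : ℕ → ℝ} (hb : ∀ n, 0 ≤ b n) :
    ∑ K ∈ Ioc 0 (m + 1), K * ∑ n ∈ lacunaryBlock K, b n ≤
      3 * ∑ n ∈ Icc 1 (2 ^ m), b n * Real.log (n + 1) := by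
  classical
  have hdisj : ((Ioc 0 (m + 1) : Finset ℕ) : Set ℕ).PairwiseDisjoint lacunaryBlock :=
    fun K _ L _ h => lacunaryBlock_disjoint h
  have hsub : (Ioc 0 (m + 1)).biUnion lacunaryBlock ⊆ Icc 1 (2 ^ m) :=
    biUnion_subset.2 fun K hK => lacunaryBlock_subset (mem_Ioc.1 hK).2
  calc ∑ K ∈ Ioc 0 (m + 1), K * ∑ n ∈ lacunaryBlock K, b n
      ≤ ∑ K ∈ Ioc 0 (m + 1), ∑ n ∈ lacunaryBlock K, 3 * (b n * Real.log (n + 1)) := by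
        refine sum_le_sum fun K _ => ?_
        rw [mul_sum]
        refine sum_le_sum fun n hn => ?_
        nlinarith [natCast_le_three_mul_log hn, hb n]
    _ = 3 * ∑ n ∈ (Ioc 0 (m + 1)).biUnion lacunaryBlock, b n * Real.log (n + 1) := by
        rw [sum_biUnion hdisj, mul_sum]; simp_rw [mul_sum]
    _ ≤ 3 * ∑ n ∈ Icc 1 (2 ^ m), b n * Real.log (n + 1) := by
        refine mul_le_mul_of_nonneg_left (sum_le_sum_of_subset_of_nonneg hsub fun n _ _ => ?_)
          (by norm_num)
        exact mul_nonneg (hb n) (Real.log_nonneg (by simp))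

section Orthogonal

variable {α ι κ : Type*} [MeasurableSpace α] {μ : Measure α}

lemma memLp_two_of_integral_mul_self_ne_zero {f : α → ℝ} (hf : AEStronglyMeasurable f μ)
    (h : ∫ x, f x * f x ∂μ ≠ 0) : MemLp f 2 μ := by
  refine (memLp_two_iff_integrable_sq hf).2 ?_
  by_contra hni
  exact h (integral_undef (by simpa [sq] using hni))

lemma integral_sum_mul_sum {F : ι → α → ℝ} {G : κ → α → ℝ} {S : Finset ι} {T : Finset κ}
    (hF : ∀ i ∈ S, MemLp (F i) 2 μ) (hG : ∀ j ∈ T, MemLp (G j) 2 μ) :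
    ∫ x, (∑ i ∈ S, F i x) * (∑ j ∈ T, G j x) ∂μ = ∑ i ∈ S, ∑ j ∈ T, ∫ x, F i x * G j x ∂μ := by
  have hint : ∀ i ∈ S, ∀ j ∈ T, Integrable (fun x => F i x * G j x) μ :=
    fun i hi j hj => (hF i hi).integrable_mul (hG j hj)
  simp_rw [sum_mul_sum]
  rw [integral_finsetSum _ fun i hi => integrable_finsetSum _ (hint i hi)]
  exact sum_congr rfl fun i hi => integral_finsetSum _ (hint i hi)

lemma integral_sq_sum_of_orthogonal {F : ι → α → ℝ} {T : Finset ι}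
    (hF : ∀ i ∈ T, MemLp (F i) 2 μ)
    (horth : ∀ i ∈ T, ∀ j ∈ T, i ≠ j → ∫ x, F i x * F j x ∂μ = 0) :
    ∫ x, (∑ i ∈ T, F i x) ^ 2 ∂μ = ∑ i ∈ T, ∫ x, F i x ^ 2 ∂μ := by
  classical
  simp_rw [sq]
  rw [integral_sum_mul_sum hF hF]
  refine sum_congr rfl fun i hi => ?_
  rw [sum_eq_single_of_mem i hi fun j hj hji => horth i hi j hj hji.symm]

lemma integral_sum_mul_sum_of_orthonormal {φ : ι → α → ℝ} {I S T : Finset ι} [DecidableEq ι]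
    (hφ : ∀ i ∈ I, MemLp (φ i) 2 μ)
    (horth : ∀ i ∈ I, ∀ j ∈ I, ∫ x, φ i x * φ j x ∂μ = if i = j then 1 else 0)
    (hS : S ⊆ I) (hT : T ⊆ I) (a : ι → ℝ) :
    ∫ x, (∑ i ∈ S, a i * φ i x) * (∑ j ∈ T, a j * φ j x) ∂μ = ∑ i ∈ S ∩ T, a i ^ 2 := by
  have hL2 : ∀ i ∈ I, MemLp (fun x => a i * φ i x) 2 μ := fun i hi => (hφ i hi).const_mul _
  have hrow : ∀ i ∈ S, ∑ j ∈ T, ∫ x, a i * φ i x * (a j * φ j x) ∂μ =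
      if i ∈ T then a i ^ 2 else 0 := by
    intro i hi
    have hterm : ∀ j ∈ T, ∫ x, a i * φ i x * (a j * φ j x) ∂μ = if i = j then a i * a j else 0 := by
      intro j hj
      rw [funext fun x => mul_mul_mul_comm (a i) (φ i x) (a j) (φ j x), integral_const_mul,
        horth i (hS hi) j (hT hj), mul_ite, mul_one, mul_zero]
    rw [sum_congr rfl hterm, sum_ite_eq, sq]
  rw [integral_sum_mul_sum (fun i hi => hL2 i (hS hi)) (fun j hj => hL2 j (hT hj)),
    sum_congr rfl hrow, ← sum_filter, filter_mem_eq_inter]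

theorem integral_sqVar_sq_le_of_orthogonal (N : ℕ) {F : ℕ → α → ℝ}
    (hF : ∀ K ∈ Ioc 0 N, MemLp (F K) 2 μ)
    (horth : ∀ K ∈ Ioc 0 N, ∀ L ∈ Ioc 0 N, K ≠ L → ∫ x, F K x * F L x ∂μ = 0) :
    ∫ x, sqVar N (F · x) ^ 2 ∂μ ≤ 14 * ∑ K ∈ Ioc 0 N, K * ∫ x, F K x ^ 2 ∂μ := by
  have hsub : ∀ p ∈ shortDyadicIntervals N, dyadicInterval p ⊆ Ioc 0 N :=
    fun p hp => (mem_filter.1 hp).2.1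
  have hint : ∀ p ∈ shortDyadicIntervals N,
      Integrable (fun x => 2 ^ p.1 * (∑ K ∈ dyadicInterval p, F K x) ^ 2) μ :=
    fun p hp => ((memLp_finsetSum _ fun K hK => hF K (hsub p hp hK)).integrable_sq).const_mul _
  calc ∫ x, sqVar N (F · x) ^ 2 ∂μ
      ≤ ∫ x, 7 * ∑ p ∈ shortDyadicIntervals N, 2 ^ p.1 * (∑ K ∈ dyadicInterval p, F K x) ^ 2 ∂μ :=
        integral_mono_of_nonneg (ae_of_all _ fun _ => sq_nonneg _)
          ((integrable_finsetSum _ hint).const_mul _) (ae_of_all _ fun x => sqVar_sq_le N (F · x))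
    _ = 7 * ∑ p ∈ shortDyadicIntervals N, 2 ^ p.1 * ∑ K ∈ dyadicInterval p, ∫ x, F K x ^ 2 ∂μ := by
        rw [integral_const_mul, integral_finsetSum _ hint]
        refine congrArg _ (sum_congr rfl fun p hp => ?_)
        rw [integral_const_mul, integral_sq_sum_of_orthogonal (fun K hK => hF K (hsub p hp hK))
          fun K hK L hL => horth K (hsub p hp hK) L (hsub p hp hL)]
    _ ≤ 7 * (2 * ∑ K ∈ Ioc 0 N, K * ∫ x, F K x ^ 2 ∂μ) := by
        gcongr
        exact sum_shortDyadicIntervals_le N fun K => integral_nonneg fun _ => sq_nonneg _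
    _ = 14 * ∑ K ∈ Ioc 0 N, K * ∫ x, F K x ^ 2 ∂μ := by ring

theorem integral_sqVar_sq_lacunaryBlock_le (m : ℕ) {φ : ℕ → α → ℝ}
    (hφ : ∀ n ∈ Icc 1 (2 ^ m), MemLp (φ n) 2 μ)
    (horth : ∀ i ∈ Icc 1 (2 ^ m), ∀ j ∈ Icc 1 (2 ^ m),
      ∫ x, φ i x * φ j x ∂μ = if i = j then 1 else 0) (a : ℕ → ℝ) :
    ∫ x, sqVar (m + 1) (fun K => ∑ n ∈ lacunaryBlock K, a n * φ n x) ^ 2 ∂μ ≤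
      42 * ∑ n ∈ Icc 1 (2 ^ m), a n ^ 2 * Real.log (n + 1) := by
  have hblock : ∀ K ∈ Ioc 0 (m + 1), lacunaryBlock K ⊆ Icc 1 (2 ^ m) :=
    fun K hK => lacunaryBlock_subset (mem_Ioc.1 hK).2
  have hinner : ∀ K ∈ Ioc 0 (m + 1), ∀ L ∈ Ioc 0 (m + 1),
      ∫ x, (∑ n ∈ lacunaryBlock K, a n * φ n x) * (∑ n ∈ lacunaryBlock L, a n * φ n x) ∂μ =
        ∑ n ∈ lacunaryBlock K ∩ lacunaryBlock L, a n ^ 2 :=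
    fun K hK L hL => integral_sum_mul_sum_of_orthonormal hφ horth (hblock K hK) (hblock L hL) a
  have hvar := integral_sqVar_sq_le_of_orthogonal (m + 1)
    (fun K hK => memLp_finsetSum _ fun n hn => (hφ n (hblock K hK hn)).const_mul (a n))
    fun K hK L hL hKL => by
      rw [hinner K hK L hL, disjoint_iff_inter_eq_empty.1 (lacunaryBlock_disjoint hKL), sum_empty]
  have hnorm : ∀ K ∈ Ioc 0 (m + 1),
      ∫ x, (∑ n ∈ lacunaryBlock K, a n * φ n x) ^ 2 ∂μ = ∑ n ∈ lacunaryBlock K, a n ^ 2 :=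
    fun K hK => by simpa only [sq, inter_self] using hinner K hK K hK
  calc ∫ x, sqVar (m + 1) (fun K => ∑ n ∈ lacunaryBlock K, a n * φ n x) ^ 2 ∂μ
      ≤ 14 * ∑ K ∈ Ioc 0 (m + 1), K * ∑ n ∈ lacunaryBlock K, a n ^ 2 := by
        rwa [sum_congr rfl fun K hK => by rw [hnorm K hK]] at hvar
    _ ≤ 14 * (3 * ∑ n ∈ Icc 1 (2 ^ m), a n ^ 2 * Real.log (n + 1)) := by
        gcongr
        exact sum_mul_sum_lacunaryBlock_le m fun n => sq_nonneg (a n)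
    _ = 42 * ∑ n ∈ Icc 1 (2 ^ m), a n ^ 2 * Real.log (n + 1) := by ring

end Orthogonal

/-- The lacunary differences `D_0 = a_1 φ_1`, `D_k = ∑_{n=2^{k-1}+1}^{2^k} a_n φ_n`,
indexed here as a sequence starting at `1`: position `K` corresponds to `D_{K-1}`. -/
theorem sq_var_lacunary :
    ∃ C : ℝ, 0 < C ∧ ∀ (m : ℕ) (φ : ℕ → ℝ → ℝ) (a : ℕ → ℝ),
      (∀ n, Measurable (φ n)) →
      (∀ i ∈ Finset.Icc 1 (2 ^ m), ∀ n ∈ Finset.Icc 1 (2 ^ m),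
        (∫ x in Set.Icc (0:ℝ) 1, φ i x * φ n x) = if i = n then (1:ℝ) else 0) →
      Real.sqrt (∫ x in Set.Icc (0:ℝ) 1,
          (sqVar (m + 1) fun (K : ℕ) =>
            if K = 1 then a 1 * φ 1 x
            else ∑ n ∈ Finset.Ioc ((2 : ℕ) ^ (K - 2)) ((2 : ℕ) ^ (K - 1)), a n * φ n x) ^ 2)
        ≤ C * Real.sqrt (∑ n ∈ Finset.Icc 1 (2 ^ m),
            a n ^ 2 * Real.log ((n : ℝ) + 1)) := by
  refine ⟨7, by norm_num, fun m φ a hmeas horth => ?_⟩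
  have hφ : ∀ n ∈ Icc 1 (2 ^ m), MemLp (φ n) 2 (volume.restrict (Set.Icc (0 : ℝ) 1)) :=
    fun n hn => memLp_two_of_integral_mul_self_ne_zero (hmeas n).aestronglyMeasurable
      (by rw [horth n hn n hn, if_pos rfl]; exact one_ne_zero)
  have hD : ∀ x, (fun K => if K = 1 then a 1 * φ 1 x
      else ∑ n ∈ Ioc (2 ^ (K - 2)) (2 ^ (K - 1)), a n * φ n x) =
        fun K => ∑ n ∈ lacunaryBlock K, a n * φ n x :=
    fun x => funext (ite_eq_sum_lacunaryBlock fun n => a n * φ n x)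
  have hS : 0 ≤ ∑ n ∈ Icc 1 (2 ^ m), a n ^ 2 * Real.log (n + 1) :=
    sum_nonneg fun n _ => mul_nonneg (sq_nonneg _) (Real.log_nonneg (by simp))
  simp_rw [hD]
  calc √(∫ x in Set.Icc (0 : ℝ) 1, sqVar (m + 1) (fun K => ∑ n ∈ lacunaryBlock K, a n * φ n x) ^ 2)
      ≤ √(7 ^ 2 * ∑ n ∈ Icc 1 (2 ^ m), a n ^ 2 * Real.log (n + 1)) :=
        Real.sqrt_le_sqrt ((integral_sqVar_sq_lacunaryBlock_le m hφ horth a).trans (by linarith))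
    _ = 7 * √(∑ n ∈ Icc 1 (2 ^ m), a n ^ 2 * Real.log (n + 1)) := by
        rw [Real.sqrt_mul (by norm_num), Real.sqrt_sq (by norm_num)]
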